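/- Let H ≤ GL(d,ℝ) be integrably admissible with essential frequency support 𝒪, let ψ ∈ L²(ℝ^d) with ψ̂ ∈ C_c^∞(𝒪) satisfying the admissibility (Calderón) condition ∫_H |ψ̂(hᵀξ)|² dμ_H(h) = 1 for a.e. ξ, let (U_i)_{i∈I} be a measurable partition of H with U_i ⊆ h_i U for a relatively compact U, and define φ_i(ξ) := ∫_{U_i} |ψ̂(hᵀξ)|² dμ_H(h). Then Σ_{i ∈ I} φ_i(ξ) = 1 for every ξ satisfying the Calderón condition, each φ_i vanishes on 𝒪 \ (h_i^{-T} U^{-T} supp ψ̂), and sup_i ‖ℱ⁻¹φ_i‖_{L¹} ≤ μ_H(Ū) · ‖ℱ⁻¹(|ψ̂|²)‖_{L¹} < ∞. -/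

import Mathlib

open MeasureTheory Matrix Topology
open scoped Pointwise ENNReal

/-- The dual action of `h ∈ GL(d,ℝ)` on `ξ ∈ ℝ^d`, given by `ξ ↦ hᵀ ξ`. -/
noncomputable def dualAct {d : ℕ} (h : GL (Fin d) ℝ) (ξ : Fin d → ℝ) : Fin d → ℝ :=
  ((h : Matrix (Fin d) (Fin d) ℝ)ᵀ).mulVec ξ

/-- `((Y,Z)) = {h ∈ H : hᵀ Y ∩ Z ≠ ∅}`. -/
def pairSet {d : ℕ} (H : Subgroup (GL (Fin d) ℝ)) (Y Z : Set (Fin d → ℝ)) :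
    Set (GL (Fin d) ℝ) :=
  {h | h ∈ H ∧ ∃ ξ ∈ Y, dualAct h ξ ∈ Z}

/-- `H ≤ GL(d,ℝ)` is integrably admissible with essential frequency support `O`:
`H` is closed, `O` is open, co-null and `Hᵀ`-invariant, the dual action of `H` on `O`
is proper, and `O = Hᵀ C` for some compact `C ⊆ O`. -/
def IsIntegrablyAdmissible {d : ℕ} (H : Subgroup (GL (Fin d) ℝ))
    (O : Set (Fin d → ℝ)) : Prop :=
  IsClosed (H : Set (GL (Fin d) ℝ)) ∧ IsOpen O ∧ MeasureTheory.volume Oᶜ = 0 ∧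
  (∀ h ∈ H, ∀ ξ ∈ O, dualAct h ξ ∈ O) ∧
  (∀ K : Set (Fin d → ℝ), K ⊆ O → IsCompact K →
    IsCompact {p : GL (Fin d) ℝ × (Fin d → ℝ) |
      p.1 ∈ H ∧ p.2 ∈ O ∧ p.2 ∈ K ∧ dualAct p.1 p.2 ∈ K}) ∧
  ∃ C : Set (Fin d → ℝ), C ⊆ O ∧ IsCompact C ∧ O = ⋃ h ∈ H, dualAct h '' C
/-- The Fourier transform `f̂(ξ) = ∫ f(x) e^{-2πi⟨x,ξ⟩} dx` on `ℝ^d`. -/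
noncomputable def four {d : ℕ} (f : (Fin d → ℝ) → ℂ) (ξ : Fin d → ℝ) : ℂ :=
  ∫ x : Fin d → ℝ,
    Complex.exp (-(2 * Real.pi * Complex.I) * ((∑ i, x i * ξ i : ℝ) : ℂ)) * f x

/-- The inverse Fourier transform on `ℝ^d`. -/
noncomputable def fourInv {d : ℕ} (f : (Fin d → ℝ) → ℂ) (x : Fin d → ℝ) : ℂ :=
  ∫ ξ : Fin d → ℝ,
    Complex.exp ((2 * Real.pi * Complex.I) * ((∑ i, x i * ξ i : ℝ) : ℂ)) * f ξ

/-- The quasi-regular representation `π(x,h) f = |det h|^{-1/2} f(h⁻¹(·−x))`. -/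
noncomputable def quasiReg {d : ℕ} (x : Fin d → ℝ) (h : GL (Fin d) ℝ)
    (f : (Fin d → ℝ) → ℂ) : (Fin d → ℝ) → ℂ :=
  fun y => (|(h.val).det| ^ (-(1 / 2 : ℝ)) : ℝ) • f ((h⁻¹).val.mulVec (y - x))

/-- The wavelet transform `W_ψ f (x,h) = ⟨f, π(x,h) ψ⟩`. -/
noncomputable def wavT {d : ℕ} (ψ f : (Fin d → ℝ) → ℂ)
    (x : Fin d → ℝ) (h : GL (Fin d) ℝ) : ℂ :=
  ∫ y : Fin d → ℝ, f y * (starRingEnd ℂ) (quasiReg x h ψ y)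

/-! ### Auxiliary instances and lemmas -/

section Aux

variable {d : ℕ}

instance auxMatSC : SecondCountableTopology (Matrix (Fin d) (Fin d) ℝ) :=
  inferInstanceAs (SecondCountableTopology (Fin d → Fin d → ℝ))

instance auxMatOpSC : SecondCountableTopology (Matrix (Fin d) (Fin d) ℝ)ᵐᵒᵖ :=
  (MulOpposite.opHomeomorph :
    Matrix (Fin d) (Fin d) ℝ ≃ₜ _).symm.isInducing.secondCountableTopology

instance auxGLSC : SecondCountableTopology (GL (Fin d) ℝ) :=
  (Units.isInducing_embedProduct).secondCountableTopology

instance auxHSC (H : Subgroup (GL (Fin d) ℝ)) : SecondCountableTopology H :=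
  IsInducing.subtypeVal.secondCountableTopology

lemma glDet_ne (A : GL (Fin d) ℝ) : (A.val).det ≠ 0 :=
  ((Matrix.isUnit_iff_isUnit_det _).mp A.isUnit).ne_zero

lemma glDetInv_mul (A : GL (Fin d) ℝ) : ((A⁻¹ : GL (Fin d) ℝ).val).det = ((A.val).det)⁻¹ := by
  have hmul : ((A⁻¹ : GL (Fin d) ℝ).val).det * (A.val).det = 1 := by
    rw [← Matrix.det_mul, Units.inv_mul, Matrix.det_one]
  exact eq_inv_of_mul_eq_one_left hmul

/-- The linear equivalence of `ℝ^d` given by an invertible matrix. -/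
noncomputable def glLinEquiv (A : GL (Fin d) ℝ) : (Fin d → ℝ) ≃ₗ[ℝ] (Fin d → ℝ) :=
  LinearEquiv.ofLinear (Matrix.toLin' A.val) (Matrix.toLin' (A⁻¹ : GL (Fin d) ℝ).val)
    (by rw [← Matrix.toLin'_mul, Units.mul_inv, Matrix.toLin'_one])
    (by rw [← Matrix.toLin'_mul, Units.inv_mul, Matrix.toLin'_one])

/-- The homeomorphism of `ℝ^d` given by an invertible matrix. -/
noncomputable def glHomeo (A : GL (Fin d) ℝ) : (Fin d → ℝ) ≃ₜ (Fin d → ℝ) :=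
  (glLinEquiv A).toContinuousLinearEquiv.toHomeomorph

lemma glHomeo_apply (A : GL (Fin d) ℝ) (x : Fin d → ℝ) :
    glHomeo A x = (A.val).mulVec x := by
  simp [glHomeo, glLinEquiv, Matrix.toLin'_apply]

lemma map_mulVec_volume (A : GL (Fin d) ℝ) :
    Measure.map (fun x : Fin d → ℝ => (A.val).mulVec x) volume
      = ENNReal.ofReal |(A.val).det|⁻¹ • volume := by
  have h := Real.map_matrix_volume_pi_eq_smul_volume_pi (M := A.val) (glDet_ne A)
  have h2 : ⇑(Matrix.toLin' A.val) = fun x : Fin d → ℝ => (A.val).mulVec x :=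
    funext fun x => Matrix.toLin'_apply _ _
  rw [h2] at h
  rw [h, abs_inv]

lemma integral_comp_mulVec (A : GL (Fin d) ℝ) (Φ : (Fin d → ℝ) → ℂ) :
    (∫ ξ : Fin d → ℝ, Φ ((A.val).mulVec ξ)) = |(A.val).det|⁻¹ • ∫ η : Fin d → ℝ, Φ η := by
  have hco : ⇑(glHomeo A) = fun x : Fin d → ℝ => (A.val).mulVec x :=
    funext fun x => glHomeo_apply A x
  have h := ((glHomeo A).measurableEmbedding).integral_map (μ := volume) (g := Φ)
  rw [hco, map_mulVec_volume A, integral_smul_measure] at h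
  rw [← h, ENNReal.toReal_ofReal (by positivity)]

lemma lintegral_comp_mulVec (A : GL (Fin d) ℝ) (Φ : (Fin d → ℝ) → ℝ≥0∞) :
    (∫⁻ ξ : Fin d → ℝ, Φ ((A.val).mulVec ξ))
      = ENNReal.ofReal |(A.val).det|⁻¹ * ∫⁻ η : Fin d → ℝ, Φ η := by
  have hco : ⇑(glHomeo A) = fun x : Fin d → ℝ => (A.val).mulVec x :=
    funext fun x => glHomeo_apply A x
  have h := ((glHomeo A).measurableEmbedding).lintegral_map (μ := volume) (f := Φ)
  rw [hco, map_mulVec_volume A, lintegral_smul_measure] at h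
  exact h.symm

lemma dualAct_mul (a b : GL (Fin d) ℝ) (ξ : Fin d → ℝ) :
    dualAct (a * b) ξ = dualAct b (dualAct a ξ) := by
  simp [dualAct, Matrix.transpose_mul, Matrix.mulVec_mulVec]

lemma dualAct_inv_self (a : GL (Fin d) ℝ) (ξ : Fin d → ℝ) :
    dualAct a⁻¹ (dualAct a ξ) = ξ := by
  rw [← dualAct_mul, mul_inv_cancel]
  simp [dualAct]

lemma continuous_dualAct_pair :
    Continuous fun q : GL (Fin d) ℝ × (Fin d → ℝ) => dualAct q.1 q.2 := by
  apply Continuous.matrix_mulVec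
  · exact Continuous.matrix_transpose (Units.continuous_val.comp continuous_fst)
  · exact continuous_snd

end Aux

theorem stmt15 {d : ℕ} (H : Subgroup (GL (Fin d) ℝ)) (O : Set (Fin d → ℝ))
    (hadm : IsIntegrablyAdmissible H O)
    [MeasurableSpace H] [BorelSpace H] (μH : Measure H) [μH.IsHaarMeasure]
    -- ψ ∈ L² with ψ̂ ∈ C_c^∞(O)
    (ψ : (Fin d → ℝ) → ℂ) (hψ2 : MemLp ψ 2 volume) (hψ1 : Integrable ψ volume)
    (hψsm : ContDiff ℝ (⊤ : ℕ∞) (four ψ)) (hψcs : HasCompactSupport (four ψ))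
    (hψsupp : tsupport (four ψ) ⊆ O)
    -- the Calderón admissibility condition
    (hcal : ∀ᵐ ξ : Fin d → ℝ,
      ∫ k : H, ‖four ψ (dualAct (k : GL (Fin d) ℝ) ξ)‖ ^ 2 ∂μH = 1)
    -- a measurable partition (U_i) of H with U_i ⊆ h_i U, U relatively compact
    {I : Type*} [Countable I] (h : I → H)
    (U : Set H) (hUm : MeasurableSet U) (hUc : IsCompact (closure U))
    (Ui : I → Set H) (hUim : ∀ i, MeasurableSet (Ui i))
    (hdisj : Pairwise (Function.onFun Disjoint Ui))
    (hunion : ⋃ i, Ui i = Set.univ)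
    (hsub : ∀ i, Ui i ⊆ (h i * ·) '' U)
    -- the functions φ_i(ξ) = ∫_{U_i} |ψ̂(hᵀξ)|² dμ_H(h)
    (φ : I → (Fin d → ℝ) → ℝ)
    (hφ : ∀ i ξ, φ i ξ =
      ∫ k in Ui i, ‖four ψ (dualAct (k : GL (Fin d) ℝ) ξ)‖ ^ 2 ∂μH) :
    -- (φ_i) sums to 1 at every point where the Calderón condition holds
    (∀ ξ : Fin d → ℝ,
      (∫ k : H, ‖four ψ (dualAct (k : GL (Fin d) ℝ) ξ)‖ ^ 2 ∂μH = 1) →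
      HasSum (fun i => φ i ξ) 1) ∧
    -- φ_i vanishes on O \ (h_i^{-T} U^{-T} supp ψ̂)
    (∀ i, ∀ ξ ∈ O \ (dualAct ((h i : GL (Fin d) ℝ))⁻¹ ''
        (⋃ u ∈ U, dualAct ((u : GL (Fin d) ℝ))⁻¹ '' tsupport (four ψ))),
      φ i ξ = 0) ∧
    -- uniform L¹ bound for the inverse Fourier transforms
    (∀ i, eLpNorm (fourInv fun ξ => ((φ i ξ : ℝ) : ℂ)) 1 volume ≤
      μH (closure U) * eLpNorm (fourInv fun ξ => ((‖four ψ ξ‖ ^ 2 : ℝ) : ℂ)) 1 volume) := by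
  refine ⟨?_, ?_, ?_⟩
  · -- Part 1
    intro ξ hξ
    have hint : Integrable (fun k : H => ‖four ψ (dualAct (k : GL (Fin d) ℝ) ξ)‖ ^ 2) μH := by
      by_contra hni
      rw [integral_undef hni] at hξ
      exact one_ne_zero hξ.symm
    have hs := hasSum_integral_iUnion (μ := μH)
      (f := fun k : H => ‖four ψ (dualAct (k : GL (Fin d) ℝ) ξ)‖ ^ 2) hUim hdisj
      (by rw [hunion]; exact hint.integrableOn)
    rw [hunion, Measure.restrict_univ, hξ] at hs
    have heq : (fun i => φ i ξ)
        = fun i => ∫ k in Ui i, ‖four ψ (dualAct (k : GL (Fin d) ℝ) ξ)‖ ^ 2 ∂μH :=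
      funext fun i => hφ i ξ
    rw [heq]
    exact hs
  · -- Part 2
    intro i ξ hξ
    rw [hφ]
    have hz : Set.EqOn (fun k : H => ‖four ψ (dualAct (k : GL (Fin d) ℝ) ξ)‖ ^ 2)
        (fun _ => (0 : ℝ)) (Ui i) := by
      intro k hk
      by_contra hnz
      have hη : four ψ (dualAct (k : GL (Fin d) ℝ) ξ) ≠ 0 := by
        intro h0
        apply hnz
        simp [h0]
      obtain ⟨u, hu, huk⟩ := hsub i hk
      apply hξ.2
      refine ⟨dualAct ((u : GL (Fin d) ℝ))⁻¹ (dualAct (k : GL (Fin d) ℝ) ξ), ?_, ?_⟩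
      · exact Set.mem_biUnion hu ⟨_, subset_tsupport _ hη, rfl⟩
      · have hkc : (k : GL (Fin d) ℝ) = (h i : GL (Fin d) ℝ) * (u : GL (Fin d) ℝ) := by
          rw [← huk]; rfl
        rw [hkc, dualAct_mul, dualAct_inv_self, dualAct_inv_self]
    rw [setIntegral_congr_fun (hUim i) hz]
    simp
  · -- Part 3
    intro i
    classical
    -- finiteness of `μH` on `Ui i`
    have hUiU : Ui i ⊆ (((h i)⁻¹ * ·) ⁻¹' (closure U)) := by
      intro k hk
      obtain ⟨u, hu, huk⟩ := hsub i hk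
      have hup : (h i)⁻¹ * k = u := by rw [← huk]; group
      rw [Set.mem_preimage, hup]
      exact subset_closure hu
    have hmle : μH (Ui i) ≤ μH (closure U) := by
      calc μH (Ui i) ≤ μH (((h i)⁻¹ * ·) ⁻¹' (closure U)) := measure_mono hUiU
        _ = μH (closure U) := measure_preimage_mul μH _ _
    haveI hfin : IsFiniteMeasure (μH.restrict (Ui i)) := by
      constructor
      rw [Measure.restrict_apply_univ]
      exact lt_of_le_of_lt hmle hUc.measure_lt_top
    set ν := μH.restrict (Ui i) with hν
    haveI : SigmaFinite ν := IsFiniteMeasure.toSigmaFinite ν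
    haveI : SFinite ν := by
      set_option synthInstance.maxHeartbeats 1000000 in infer_instance
    -- the window `|ψ̂|²`
    set g : (Fin d → ℝ) → ℂ := fun η => ((‖four ψ η‖ ^ 2 : ℝ) : ℂ) with hgdef
    have hgc : Continuous g :=
      Complex.continuous_ofReal.comp ((hψsm.continuous.norm).pow 2)
    have hgcs : HasCompactSupport g :=
      hψcs.comp_left (g := fun z : ℂ => ((‖z‖ ^ 2 : ℝ) : ℂ)) (by simp)
    have hgint : Integrable g volume := hgc.integrable_of_hasCompactSupport hgcs
    obtain ⟨C, hC⟩ := hgcs.exists_bound_of_continuous hgc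
    set F : (Fin d → ℝ) → ℂ := fourInv g with hFdef
    have hsum_cont : ∀ y : Fin d → ℝ, Continuous fun ξ : Fin d → ℝ => (∑ j, y j * ξ j : ℝ) :=
      fun y => continuous_finset_sum _ fun j _ => continuous_const.mul (continuous_apply j)
    have hsum_cont' : ∀ η : Fin d → ℝ, Continuous fun y : Fin d → ℝ => (∑ j, y j * η j : ℝ) :=
      fun η => continuous_finset_sum _ fun j _ => (continuous_apply j).mul continuous_const
    have hexp1 : ∀ r : ℝ, ‖Complex.exp ((2 * Real.pi * Complex.I) * (r : ℂ))‖ = 1 := by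
      intro r
      rw [show (2 * Real.pi * Complex.I) * (r : ℂ) = ((2 * Real.pi * r : ℝ) : ℂ) * Complex.I by
        push_cast; ring]
      exact Complex.norm_exp_ofReal_mul_I _
    have hFc : Continuous F := by
      rw [hFdef]
      unfold fourInv
      apply continuous_of_dominated (bound := fun η : Fin d → ℝ => ‖g η‖)
      · intro y
        exact ((Complex.continuous_exp.comp (continuous_const.mul
          (Complex.continuous_ofReal.comp (hsum_cont y)))).mul hgc).aestronglyMeasurable
      · intro y
        filter_upwards with η
        rw [norm_mul, hexp1, one_mul]
      · exact hgint.norm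
      · filter_upwards with η
        exact (Complex.continuous_exp.comp (continuous_const.mul
          (Complex.continuous_ofReal.comp (hsum_cont' η)))).mul continuous_const
    -- a compact set capturing the frequency support of all `φ i`-integrands
    set V : Set (GL (Fin d) ℝ) :=
      (fun u : H => (h i : GL (Fin d) ℝ) * (u : GL (Fin d) ℝ)) '' closure U with hV
    have hVco : IsCompact V := hUc.image (continuous_const.mul continuous_subtype_val)
    set K : Set (Fin d → ℝ) :=
      (fun q : GL (Fin d) ℝ × (Fin d → ℝ) => dualAct q.1⁻¹ q.2) ''
        (V ×ˢ tsupport (four ψ)) with hK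
    have hKco : IsCompact K := (hVco.prod hψcs).image
      (continuous_dualAct_pair.comp ((continuous_inv.comp continuous_fst).prodMk continuous_snd))
    have hKm : MeasurableSet K := hKco.isClosed.measurableSet
    have hmem : ∀ k : H, k ∈ Ui i → ∀ ξ : Fin d → ℝ,
        g (dualAct (k : GL (Fin d) ℝ) ξ) ≠ 0 → ξ ∈ K := by
      intro k hk ξ hne
      have hη : dualAct (k : GL (Fin d) ℝ) ξ ∈ tsupport (four ψ) := by
        apply subset_tsupport
        intro h0
        apply hne
        simp [hgdef, h0]
      obtain ⟨u, hu, huk⟩ := hsub i hk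
      have hkV : (k : GL (Fin d) ℝ) ∈ V := ⟨u, subset_closure hu, by rw [← huk]; rfl⟩
      exact ⟨((k : GL (Fin d) ℝ), dualAct (k : GL (Fin d) ℝ) ξ),
        Set.mk_mem_prod hkV hη, dualAct_inv_self _ _⟩
    -- the key pointwise identity for the inverse Fourier transform of `φ i`
    have key : ∀ x : Fin d → ℝ,
        fourInv (fun ξ => ((φ i ξ : ℝ) : ℂ)) x
          = ∫ k in Ui i, ((|(((k : GL (Fin d) ℝ))⁻¹).val.det| : ℝ) : ℂ)
              * F ((((k : GL (Fin d) ℝ))⁻¹).val.mulVec x) ∂μH := by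
      intro x
      set f : (Fin d → ℝ) → H → ℂ := fun ξ k =>
        Complex.exp ((2 * Real.pi * Complex.I) * ((∑ j, x j * ξ j : ℝ) : ℂ))
          * g (dualAct (k : GL (Fin d) ℝ) ξ) with hf
      have hfc : Continuous (Function.uncurry f) := by
        apply Continuous.mul
        · exact Complex.continuous_exp.comp (continuous_const.mul
            (Complex.continuous_ofReal.comp ((hsum_cont x).comp continuous_fst)))
        · exact hgc.comp (continuous_dualAct_pair.comp
            ((continuous_subtype_val.comp continuous_snd).prodMk continuous_fst))
      have hnormf : ∀ (ξ : Fin d → ℝ) (k : H),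
          ‖f ξ k‖ = ‖g (dualAct (k : GL (Fin d) ℝ) ξ)‖ := by
        intro ξ k
        rw [hf]
        simp only []
        rw [norm_mul, hexp1, one_mul]
      have hslice : ∀ ξ : Fin d → ℝ, Integrable (fun k : H => f ξ k) ν := by
        intro ξ
        apply (integrable_const C).mono'
          (hfc.comp (Continuous.prodMk_right ξ)).aestronglyMeasurable
        filter_upwards with k
        show ‖f ξ k‖ ≤ C
        rw [hnormf]
        exact hC _
      have hfint : Integrable (Function.uncurry f) (volume.prod ν) := by
        rw [integrable_prod_iff hfc.aestronglyMeasurable]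
        constructor
        · filter_upwards with ξ
          exact hslice ξ
        · apply Integrable.mono'
            (g := K.indicator fun _ => C * (ν Set.univ).toReal)
            ((integrableOn_const hKco.measure_lt_top.ne).integrable_indicator hKm)
            (hfc.aestronglyMeasurable.norm.integral_prod_right')
          filter_upwards with ξ
          by_cases hξK : ξ ∈ K
          · rw [Set.indicator_of_mem hξK]
            show ‖∫ k : H, ‖f ξ k‖ ∂ν‖ ≤ C * (ν Set.univ).toReal
            rw [Real.norm_eq_abs, abs_of_nonneg (integral_nonneg fun k => norm_nonneg _)]
            calc (∫ k, ‖f ξ k‖ ∂ν) ≤ ∫ _k, C ∂ν := by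
                  apply integral_mono (hslice ξ).norm (integrable_const C)
                  intro k
                  show ‖f ξ k‖ ≤ C
                  rw [hnormf]
                  exact hC _
              _ = C * (ν Set.univ).toReal := by rw [integral_const, smul_eq_mul, measureReal_def]; ring
          · have hz : ∀ᵐ k ∂ν, ‖f ξ k‖ = 0 := by
              rw [hν]
              filter_upwards [ae_restrict_mem (hUim i)] with k hk
              rw [hnormf, norm_eq_zero]
              by_contra hne
              exact hξK (hmem k hk ξ hne)
            show ‖∫ k : H, ‖f ξ k‖ ∂ν‖ ≤ K.indicator (fun _ => C * (ν Set.univ).toReal) ξ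
            rw [integral_congr_ae hz, integral_zero, Set.indicator_of_notMem hξK]
            simp
      have hcast : ∀ ξ : Fin d → ℝ, ((φ i ξ : ℝ) : ℂ)
          = ∫ k in Ui i, g (dualAct (k : GL (Fin d) ℝ) ξ) ∂μH := by
        intro ξ
        rw [hφ i ξ]
        exact (integral_ofReal).symm
      have hinner : ∀ k : H,
          (∫ ξ : Fin d → ℝ, f ξ k)
            = ((|(((k : GL (Fin d) ℝ))⁻¹).val.det| : ℝ) : ℂ)
              * F ((((k : GL (Fin d) ℝ))⁻¹).val.mulVec x) := by
        intro k
        set A : GL (Fin d) ℝ := (k : GL (Fin d) ℝ) with hA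
        set y : Fin d → ℝ := ((A⁻¹).val).mulVec x with hy
        set AT : GL (Fin d) ℝ := ⟨A.valᵀ, (A⁻¹).valᵀ,
          by rw [← Matrix.transpose_mul, Units.inv_mul, Matrix.transpose_one],
          by rw [← Matrix.transpose_mul, Units.mul_inv, Matrix.transpose_one]⟩ with hATdef
        set Φ : (Fin d → ℝ) → ℂ := fun η =>
          Complex.exp ((2 * Real.pi * Complex.I) * ((∑ j, y j * η j : ℝ) : ℂ)) * g η with hΦ
        have h1 : ∀ ξ : Fin d → ℝ, Φ (AT.val.mulVec ξ) = f ξ k := by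
          intro ξ
          have hdot : (∑ j, y j * (AT.val.mulVec ξ) j : ℝ) = ∑ j, x j * ξ j := by
            have h2 : y ⬝ᵥ (A.valᵀ.mulVec ξ) = x ⬝ᵥ ξ := by
              rw [Matrix.dotProduct_mulVec, Matrix.vecMul_transpose, hy,
                Matrix.mulVec_mulVec, Units.mul_inv, Matrix.one_mulVec]
            simpa [dotProduct] using h2
          rw [hΦ, hf]
          simp only []
          rw [hdot]
          rfl
        calc (∫ ξ : Fin d → ℝ, f ξ k)
            = ∫ ξ : Fin d → ℝ, Φ (AT.val.mulVec ξ) := by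
              rw [show (fun ξ : Fin d → ℝ => f ξ k)
                = fun ξ : Fin d → ℝ => Φ (AT.val.mulVec ξ) from funext fun ξ => (h1 ξ).symm]
          _ = |AT.val.det|⁻¹ • ∫ η : Fin d → ℝ, Φ η := integral_comp_mulVec AT Φ
          _ = ((|(((k : GL (Fin d) ℝ))⁻¹).val.det| : ℝ) : ℂ)
              * F ((((k : GL (Fin d) ℝ))⁻¹).val.mulVec x) := by
              have hATval : AT.val = A.valᵀ := rfl
              have hdet : |AT.val.det|⁻¹ = |((A⁻¹ : GL (Fin d) ℝ).val).det| := by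
                rw [hATval, Matrix.det_transpose, glDetInv_mul, abs_inv]
              rw [hdet, Complex.real_smul]
              rfl
      calc fourInv (fun ξ => ((φ i ξ : ℝ) : ℂ)) x
          = ∫ ξ : Fin d → ℝ, ∫ k in Ui i, f ξ k ∂μH := by
            unfold fourInv
            apply integral_congr_ae
            filter_upwards with ξ
            rw [hcast ξ, ← integral_const_mul]
        _ = ∫ k in Ui i, ∫ ξ : Fin d → ℝ, f ξ k ∂volume ∂μH :=
            integral_integral_swap hfint
        _ = ∫ k in Ui i, ((|(((k : GL (Fin d) ℝ))⁻¹).val.det| : ℝ) : ℂ)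
              * F ((((k : GL (Fin d) ℝ))⁻¹).val.mulVec x) ∂μH := by
            apply integral_congr_ae
            filter_upwards with k
            exact hinner k
    -- the final estimate
    have hFm : Measurable F := hFc.measurable
    have hcont_c : Continuous fun k : H => |(((k : GL (Fin d) ℝ))⁻¹).val.det| :=
      continuous_abs.comp (Continuous.matrix_det (Units.continuous_val.comp
        (continuous_inv.comp continuous_subtype_val)))
    have hcont_B : Continuous fun p : (Fin d → ℝ) × H =>
        (((p.2 : GL (Fin d) ℝ))⁻¹).val.mulVec p.1 := by
      apply Continuous.matrix_mulVec
      · exact Units.continuous_val.comp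
          (continuous_inv.comp (continuous_subtype_val.comp continuous_snd))
      · exact continuous_fst
    rw [eLpNorm_one_eq_lintegral_enorm, eLpNorm_one_eq_lintegral_enorm]
    have hcontP : Continuous fun p : (Fin d → ℝ) × H =>
        ((|(((p.2 : GL (Fin d) ℝ))⁻¹).val.det| : ℝ) : ℂ)
          * F ((((p.2 : GL (Fin d) ℝ))⁻¹).val.mulVec p.1) :=
      (Complex.continuous_ofReal.comp (hcont_c.comp continuous_snd)).mul (hFc.comp hcont_B)
    have hmeas2 : AEMeasurable (Function.uncurry fun (x : Fin d → ℝ) (k : H) =>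
        (‖((|(((k : GL (Fin d) ℝ))⁻¹).val.det| : ℝ) : ℂ)
          * F ((((k : GL (Fin d) ℝ))⁻¹).val.mulVec x)‖₊ : ℝ≥0∞)) (volume.prod ν) :=
      (hcontP.measurable.nnnorm.coe_nnreal_ennreal).aemeasurable
    calc (∫⁻ x, ‖fourInv (fun ξ => ((φ i ξ : ℝ) : ℂ)) x‖₊ ∂volume)
        = ∫⁻ x, ‖∫ k in Ui i, ((|(((k : GL (Fin d) ℝ))⁻¹).val.det| : ℝ) : ℂ)
            * F ((((k : GL (Fin d) ℝ))⁻¹).val.mulVec x) ∂μH‖₊ ∂volume := by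
          apply lintegral_congr
          intro x
          rw [key x]
      _ ≤ ∫⁻ x, ∫⁻ k in Ui i, ‖((|(((k : GL (Fin d) ℝ))⁻¹).val.det| : ℝ) : ℂ)
            * F ((((k : GL (Fin d) ℝ))⁻¹).val.mulVec x)‖₊ ∂μH ∂volume :=
          lintegral_mono fun x => enorm_integral_le_lintegral_enorm _
      _ = ∫⁻ k in Ui i, ∫⁻ x, ‖((|(((k : GL (Fin d) ℝ))⁻¹).val.det| : ℝ) : ℂ)
            * F ((((k : GL (Fin d) ℝ))⁻¹).val.mulVec x)‖₊ ∂volume ∂μH :=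
          lintegral_lintegral_swap hmeas2
      _ = ∫⁻ _k in Ui i, (∫⁻ η, (‖F η‖₊ : ℝ≥0∞) ∂volume) ∂μH := by
          apply lintegral_congr
          intro k
          set A : GL (Fin d) ℝ := ((k : GL (Fin d) ℝ))⁻¹ with hA2
          have hcne : |A.val.det| ≠ 0 := abs_ne_zero.mpr (glDet_ne A)
          have hBxm : Measurable fun x : Fin d → ℝ => (‖F (A.val.mulVec x)‖₊ : ℝ≥0∞) :=
            ((hFm.comp (Continuous.matrix_mulVec continuous_const continuous_id).measurable).nnnorm).coe_nnreal_ennreal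
          calc (∫⁻ x, ‖((|A.val.det| : ℝ) : ℂ) * F (A.val.mulVec x)‖₊ ∂volume)
              = ∫⁻ x, (‖((|A.val.det| : ℝ) : ℂ)‖₊ : ℝ≥0∞) * ‖F (A.val.mulVec x)‖₊ ∂volume := by
                apply lintegral_congr
                intro x
                rw [nnnorm_mul, ENNReal.coe_mul]
            _ = (‖((|A.val.det| : ℝ) : ℂ)‖₊ : ℝ≥0∞) * ∫⁻ x, (‖F (A.val.mulVec x)‖₊ : ℝ≥0∞) ∂volume :=
                lintegral_const_mul _ hBxm
            _ = ENNReal.ofReal |A.val.det| * (ENNReal.ofReal |A.val.det|⁻¹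
                  * ∫⁻ η, (‖F η‖₊ : ℝ≥0∞) ∂volume) := by
                rw [lintegral_comp_mulVec A (fun η => (‖F η‖₊ : ℝ≥0∞))]
                congr 1
                rw [← ENNReal.ofReal_coe_nnreal, coe_nnnorm, Complex.norm_real, Real.norm_eq_abs, abs_abs]
            _ = ∫⁻ η, (‖F η‖₊ : ℝ≥0∞) ∂volume := by
                rw [← mul_assoc, ← ENNReal.ofReal_mul (abs_nonneg _),
                  mul_inv_cancel₀ hcne, ENNReal.ofReal_one, one_mul]
      _ = μH (Ui i) * ∫⁻ η, (‖F η‖₊ : ℝ≥0∞) ∂volume := by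
          rw [setLIntegral_const, mul_comm]
      _ ≤ μH (closure U) * ∫⁻ x, ‖F x‖₊ ∂volume :=
          mul_le_mul_left hmle _
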